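/- Linearization of the HJI PDE under Assumption 1: let ξ : ℝⁿ × ℝ → ℝ be everywhere positive, twice continuously differentiable in x and continuously differentiable in t at the point (x, t), let λ > 0, and define J := −λ · log ∘ ξ. Assume the coefficient matrices satisfy Assumption 1 at (x, t): ΣΣᵀ = λ(G_u R_u⁻¹ G_uᵀ − G_v R_v⁻¹ G_vᵀ). Then J satisfies the HJI equation −∂ₜJ = V + fᵀ∇ₓJ + (1/2)Tr(ΣΣᵀ∇ₓ²J) + (1/2)(∇ₓJ)ᵀ(G_v R_v⁻¹ G_vᵀ − G_u R_u⁻¹ G_uᵀ)∇ₓJ at (x, t) if and only if ξ satisfies the linear backward equation ∂ₜξ = (V/λ)ξ − fᵀ∇ₓξ − (1/2)Tr(ΣΣᵀ∇ₓ²ξ) at (x, t). -/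

import Mathlib

/-!
Cole–Hopf transform. With `J = -λ log ξ` one has `∂ₜJ = -λ ∂ₜξ / ξ`, `∇ₓJ = -λ ∇ₓξ / ξ` and
`∇ₓ²J = -λ (∇ₓ²ξ / ξ - ∇ₓξ ∇ₓξᵀ / ξ²)`. Substituting into the HJI equation, the quadratic form in
`∇ₓξ` coming from the Hessian term and the one coming from the control terms have coefficients
`λ / 2ξ²` and `-λ / 2ξ²` once Assumption 1 expresses `G_v R_v⁻¹ G_vᵀ - G_u R_u⁻¹ G_uᵀ` as
`-ΣΣᵀ / λ`, so they cancel; what remains is `λ / ξ` times the linear backward equation.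
-/

open Matrix

/-- Partial derivative in the time variable of `g : (state, time) ↦ ℝ`. -/
noncomputable def pderivT {n : ℕ} (g : (Fin n → ℝ) → ℝ → ℝ) (x : Fin n → ℝ) (t : ℝ) : ℝ :=
  deriv (fun s => g x s) t

/-- Gradient in the state variable: `(∇ₓ g)ᵢ = ∂ᵢ g`. -/
noncomputable def gradX {n : ℕ} (g : (Fin n → ℝ) → ℝ → ℝ) (x : Fin n → ℝ) (t : ℝ) :
    Fin n → ℝ :=
  fun i => fderiv ℝ (fun y => g y t) x (Pi.single i 1)

/-- Hessian matrix in the state variable: `(∇ₓ² g)ᵢⱼ = ∂ᵢ∂ⱼ g`. -/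
noncomputable def hessX {n : ℕ} (g : (Fin n → ℝ) → ℝ → ℝ) (x : Fin n → ℝ) (t : ℝ) :
    Matrix (Fin n) (Fin n) ℝ :=
  fun i j =>
    fderiv ℝ (fun y => fderiv ℝ (fun z => g z t) y (Pi.single j 1)) x (Pi.single i 1)

section LogTransform

variable {E : Type*} [NormedAddCommGroup E] [NormedSpace ℝ E] {g : E → ℝ} {x : E}

theorem fderiv_const_mul_log (c : ℝ) (hg : DifferentiableAt ℝ g x) (h0 : g x ≠ 0) :
    fderiv ℝ (fun y => c * Real.log (g y)) x = (c / g x) • fderiv ℝ g x := by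
  rw [((hg.hasFDerivAt.log h0).const_mul c).fderiv, smul_smul, div_eq_mul_inv]

theorem fderiv_fderiv_const_mul_log_apply (c : ℝ) (hg : ContDiffAt ℝ 2 g x) (h0 : g x ≠ 0)
    (v w : E) :
    fderiv ℝ (fun y => fderiv ℝ (fun z => c * Real.log (g z)) y v) x w =
      c / g x * fderiv ℝ (fun y => fderiv ℝ g y v) x w
        - c / g x ^ 2 * (fderiv ℝ g x v * fderiv ℝ g x w) := by
  have h_first : (fun y => fderiv ℝ (fun z => c * Real.log (g z)) y v) =ᶠ[nhds x]
      fun y => c * ((g y)⁻¹ * fderiv ℝ g y v) := by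
    filter_upwards [hg.eventually (by simp), hg.continuousAt.eventually_ne h0] with y hy hy0
    rw [fderiv_const_mul_log c (hy.differentiableAt (by norm_num)) hy0]
    simp [div_eq_mul_inv, mul_assoc]
  have hinv : HasFDerivAt (fun y => (g y)⁻¹) (-(g x ^ 2)⁻¹ • fderiv ℝ g x) x :=
    (hasDerivAt_inv h0).comp_hasFDerivAt x (hg.differentiableAt (by norm_num)).hasFDerivAt
  have hDv : DifferentiableAt ℝ (fun y => fderiv ℝ g y v) x :=
    ((hg.fderiv_right (m := 1) (by norm_num)).clm_apply contDiffAt_const).differentiableAt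
      (by norm_num)
  have hprod : HasFDerivAt (fun y => c * ((g y)⁻¹ * fderiv ℝ g y v)) _ x :=
    (hinv.mul hDv.hasFDerivAt).const_mul c
  rw [h_first.fderiv_eq, hprod.fderiv]
  simp only [neg_smul, smul_neg, smul_add, _root_.add_apply, _root_.smul_apply, smul_eq_mul,
    _root_.neg_apply]
  field_simp
  ring

end LogTransform

section PartialDerivatives

variable {n : ℕ} {ξ : (Fin n → ℝ) → ℝ → ℝ} {x : Fin n → ℝ} {t : ℝ}

theorem pderivT_const_mul_log (c : ℝ) (hξ : DifferentiableAt ℝ (fun s => ξ x s) t)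
    (h0 : ξ x t ≠ 0) :
    pderivT (fun y s => c * Real.log (ξ y s)) x t = c / ξ x t * pderivT ξ x t := by
  rw [pderivT, deriv_const_mul _ (hξ.log h0), deriv.log hξ h0, pderivT]
  ring

theorem gradX_const_mul_log (c : ℝ) (hξ : DifferentiableAt ℝ (fun y => ξ y t) x)
    (h0 : ξ x t ≠ 0) :
    gradX (fun y s => c * Real.log (ξ y s)) x t = (c / ξ x t) • gradX ξ x t := by
  ext i
  simp only [gradX, fderiv_const_mul_log c hξ h0]
  rfl

theorem hessX_const_mul_log (c : ℝ) (hξ : ContDiffAt ℝ 2 (fun y => ξ y t) x)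
    (h0 : ξ x t ≠ 0) (i j : Fin n) :
    hessX (fun y s => c * Real.log (ξ y s)) x t i j =
      c / ξ x t * hessX ξ x t i j - c / ξ x t ^ 2 * (gradX ξ x t i * gradX ξ x t j) := by
  rw [hessX, fderiv_fderiv_const_mul_log_apply c hξ h0, mul_comm (fderiv _ _ _ _)]
  rfl

end PartialDerivatives

theorem sum_sum_mul_sub_mul_mul {ι : Type*} [Fintype ι] (A H : Matrix ι ι ℝ) (g : ι → ℝ)
    (a b : ℝ) :
    ∑ i, ∑ j, A i j * (a * H i j - b * (g i * g j)) =
      a * ∑ i, ∑ j, A i j * H i j - b * (g ⬝ᵥ A *ᵥ g) := by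
  simp only [dotProduct, mulVec, Finset.mul_sum, ← Finset.sum_sub_distrib]
  refine Finset.sum_congr rfl fun i _ => Finset.sum_congr rfl fun j _ => ?_
  ring

theorem cole_hopf_linearizes_HJI_general {n m l k : ℕ}
    (f : Fin n → ℝ) (V : ℝ)
    (Sig : Matrix (Fin n) (Fin k) ℝ)
    (Gu : Matrix (Fin n) (Fin m) ℝ) (Gv : Matrix (Fin n) (Fin l) ℝ)
    (Ru : Matrix (Fin m) (Fin m) ℝ) (Rv : Matrix (Fin l) (Fin l) ℝ)
    (ξ : (Fin n → ℝ) → ℝ → ℝ) (x : Fin n → ℝ) (t : ℝ)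
    (hpos : ∀ y s, 0 < ξ y s)
    (hreg_x : ContDiffAt ℝ 2 (fun y => ξ y t) x)
    (hreg_t : ContDiffAt ℝ 1 (fun s => ξ x s) t)
    (lam : ℝ) (hlam : 0 < lam)
    (hassumption1 : Sig * Sigᵀ = lam • (Gu * Ru⁻¹ * Guᵀ - Gv * Rv⁻¹ * Gvᵀ))
    (J : (Fin n → ℝ) → ℝ → ℝ) (hJ : J = fun y s => -lam * Real.log (ξ y s)) :
    (-(pderivT J x t) =
        V + f ⬝ᵥ gradX J x t
          + (1 / 2) * (∑ i, ∑ j, (Sig * Sigᵀ) i j * hessX J x t i j)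
          + (1 / 2) * (gradX J x t ⬝ᵥ ((Gv * Rv⁻¹ * Gvᵀ - Gu * Ru⁻¹ * Guᵀ) *ᵥ gradX J x t)))
    ↔
    (pderivT ξ x t =
        (V / lam) * ξ x t - f ⬝ᵥ gradX ξ x t
          - (1 / 2) * (∑ i, ∑ j, (Sig * Sigᵀ) i j * hessX ξ x t i j)) := by
  have hξ : ξ x t ≠ 0 := (hpos x t).ne'
  have hM : Gv * Rv⁻¹ * Gvᵀ - Gu * Ru⁻¹ * Guᵀ = -lam⁻¹ • (Sig * Sigᵀ) := by
    rw [hassumption1, smul_smul, neg_mul, inv_mul_cancel₀ hlam.ne', neg_smul, one_smul, neg_sub]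
  subst hJ
  rw [pderivT_const_mul_log _ (hreg_t.differentiableAt one_ne_zero) hξ,
    gradX_const_mul_log _ (hreg_x.differentiableAt two_ne_zero) hξ,
    funext₂ (hessX_const_mul_log _ hreg_x hξ), sum_sum_mul_sub_mul_mul, hM]
  simp only [dotProduct_smul, smul_dotProduct, smul_mulVec, mulVec_smul, smul_eq_mul]
  refine (Iff.of_eq (congrArg₂ Eq ?_ ?_)).trans (mul_right_inj' (div_ne_zero hlam.ne' hξ))
  · ring
  · -- the two quadratic forms in `∇ₓξ` cancel here
    field_simp
    ring

/-- Linearization of the HJI PDE under Assumption 1: for `ξ > 0` twice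
continuously differentiable in `x` and continuously differentiable in `t` at `(x, t)`,
`λ > 0`, `J := −λ log ∘ ξ`, and coefficient matrices satisfying Assumption 1
`ΣΣᵀ = λ(G_uR_u⁻¹G_uᵀ − G_vR_v⁻¹G_vᵀ)`, the function `J` satisfies the HJI equation
`−∂ₜJ = V + fᵀ∇ₓJ + (1/2)Tr(ΣΣᵀ∇ₓ²J) + (1/2)(∇ₓJ)ᵀ(G_vR_v⁻¹G_vᵀ − G_uR_u⁻¹G_uᵀ)∇ₓJ`
at `(x, t)` iff `ξ` satisfies the linear backward equation
`∂ₜξ = (V/λ)ξ − fᵀ∇ₓξ − (1/2)Tr(ΣΣᵀ∇ₓ²ξ)` at `(x, t)`. -/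
theorem cole_hopf_linearizes_HJI {n m l k : ℕ} (hn : 0 < n) (hm : 0 < m) (hl : 0 < l)
    (hk : 0 < k)
    (f : Fin n → ℝ) (V : ℝ)
    (Sig : Matrix (Fin n) (Fin k) ℝ)
    (Gu : Matrix (Fin n) (Fin m) ℝ) (Gv : Matrix (Fin n) (Fin l) ℝ)
    (Ru : Matrix (Fin m) (Fin m) ℝ) (Rv : Matrix (Fin l) (Fin l) ℝ)
    (hRu : Ru.PosDef) (hRv : Rv.PosDef)
    (ξ : (Fin n → ℝ) → ℝ → ℝ) (x : Fin n → ℝ) (t : ℝ)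
    (hpos : ∀ y s, 0 < ξ y s)
    (hreg_x : ContDiffAt ℝ 2 (fun y => ξ y t) x)
    (hreg_t : ContDiffAt ℝ 1 (fun s => ξ x s) t)
    (lam : ℝ) (hlam : 0 < lam)
    (hassumption1 : Sig * Sigᵀ = lam • (Gu * Ru⁻¹ * Guᵀ - Gv * Rv⁻¹ * Gvᵀ))
    (J : (Fin n → ℝ) → ℝ → ℝ) (hJ : J = fun y s => -lam * Real.log (ξ y s)) :
    (-(pderivT J x t) =
        V + f ⬝ᵥ gradX J x t
          + (1 / 2) * (∑ i, ∑ j, (Sig * Sigᵀ) i j * hessX J x t i j)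
          + (1 / 2) * (gradX J x t ⬝ᵥ ((Gv * Rv⁻¹ * Gvᵀ - Gu * Ru⁻¹ * Guᵀ) *ᵥ gradX J x t)))
    ↔
    (pderivT ξ x t =
        (V / lam) * ξ x t - f ⬝ᵥ gradX ξ x t
          - (1 / 2) * (∑ i, ∑ j, (Sig * Sigᵀ) i j * hessX ξ x t i j)) :=
  cole_hopf_linearizes_HJI_general f V Sig Gu Gv Ru Rv ξ x t hpos hreg_x hreg_t lam hlam
    hassumption1 J hJ
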